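/- arXiv:2503.21567 — 4 statements merged into one kernel-verified Lean document; each statement's English description precedes it below -/
import Mathlib

section
/- Let G, H, K be groups and A, B, C sets, and let φ : H → G and ψ : K → H be group homomorphisms. If T : A^G → B^H is a φ-cellular automaton and S : B^H → C^K is a ψ-cellular automaton, then the composition S ∘ T : A^G → C^K is a (φ ∘ ψ)-cellular automaton. -/
/-- Given a group homomorphism `φ : H → G`, a function `T : A^G → B^H` is a
`φ`-cellular automaton if there exist a finite subset `S ⊆ G` and a local function
`μ : A^S → B` such that `T(x)(h) = μ((φ(h)·x)|_S)`, where `(g·x)(k) = x(kg)`. -/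
def IsPhiCellularAutomaton {G H A B : Type*} [Group G] [Group H]
    (φ : H →* G) (T : (G → A) → (H → B)) : Prop :=
  ∃ (S : Finset G) (μ : ({ s : G // s ∈ S } → A) → B),
    ∀ (x : G → A) (h : H), T x h = μ (fun s => x (s.1 * φ h))

theorem stmt_10 {G H K A B C : Type*} [Group G] [Group H] [Group K]
    (φ : H →* G) (ψ : K →* H)
    (T : (G → A) → (H → B)) (S : (H → B) → (K → C))
    (hT : IsPhiCellularAutomaton φ T) (hS : IsPhiCellularAutomaton ψ S) :
    IsPhiCellularAutomaton (φ.comp ψ) (S ∘ T) := by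
  classical
  obtain ⟨ST, μ, hμ⟩ := hT
  obtain ⟨SS, ν, hν⟩ := hS
  refine ⟨(ST ×ˢ SS).image (fun p => p.1 * φ p.2),
    fun y => ν (fun t => μ (fun s =>
      y ⟨s.1 * φ t.1, Finset.mem_image.2 ⟨(s.1, t.1), Finset.mem_product.2 ⟨s.2, t.2⟩, rfl⟩⟩)),
    fun x k => ?_⟩
  simp only [Function.comp_apply, hν, hμ]
  congr 1
  funext t
  congr 1
  funext s
  simp [mul_assoc]
end

section
/- Let G, H be groups, A, B sets, and φ : H → G a group homomorphism. For every φ-cellular automaton T : A^G → B^H there exists a unique cellular automaton τ : A^G → B^G over G such that T = φ*_B ∘ τ. -/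
/-- A function `τ : A^G → B^G` is a cellular automaton over `G` if there exist a finite
memory set `S ⊆ G` and a local function `μ : A^S → B` such that
`τ(x)(g) = μ((g·x)|_S)`, where `(g·x)(h) = x(hg)`. -/
def IsCellularAutomaton {G A B : Type*} [Group G] (τ : (G → A) → (G → B)) : Prop :=
  ∃ (S : Finset G) (μ : ({ s : G // s ∈ S } → A) → B),
    ∀ (x : G → A) (g : G), τ x g = μ (fun s => x (s.1 * g))

theorem stmt_11 {G H A B : Type*} [Group G] [Group H] (φ : H →* G)
    (T : (G → A) → (H → B)) (hT : IsPhiCellularAutomaton φ T) :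
    ∃! τ : (G → A) → (G → B),
      IsCellularAutomaton τ ∧ T = (fun (y : G → B) => y ∘ φ) ∘ τ := by
  obtain ⟨S, μ, hμ⟩ := hT
  -- key: any CA τ with T = φ* ∘ τ is determined by T
  have key : ∀ τ : (G → A) → (G → B), IsCellularAutomaton τ →
      T = (fun (y : G → B) => y ∘ φ) ∘ τ →
      ∀ x g, τ x g = T (fun k => x (k * g)) 1 := by
    intro τ hca hcomp x g
    obtain ⟨S', μ', hμ'⟩ := hca
    have h1 := congrFun (congrFun hcomp (fun k => x (k * g))) 1
    simp only [Function.comp_apply] at h1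
    rw [h1, hμ', hμ']
    simp [map_one]
  refine ⟨fun x g => μ (fun s => x (s.1 * g)), ⟨⟨S, μ, fun _ _ => rfl⟩, ?_⟩, ?_⟩
  · funext x h
    simp [hμ]
  · intro τ' ⟨hca, hcomp⟩
    funext x g
    rw [key τ' hca hcomp x g, hμ]
    simp [map_one]
end

section
/- Let G₁, G₂, H be groups and A₁, A₂, B sets. Define γ_i : (A₁ × A₂)^{G₁ ∗ G₂} → A_i^{G_i} by γ_i = (ι_i)*_{A_i} ∘ π_{A_i}^{G₁ ∗ G₂} for i = 1, 2. Suppose φ : G₁ → H and ψ : G₂ → H are group homomorphisms, T₁ : B^H → A₁^{G₁} is a φ-cellular automaton, and T₂ : B^H → A₂^{G₂} is a ψ-cellular automaton. Then there exist a group homomorphism χ : G₁ ∗ G₂ → H and a χ-cellular automaton T : B^H → (A₁ × A₂)^{G₁ ∗ G₂} such that γ₁ ∘ T = T₁ and γ₂ ∘ T = T₂. -/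
theorem stmt_14 {G₁ G₂ H A₁ A₂ B : Type*} [Group G₁] [Group G₂] [Group H]
    (φ : G₁ →* H) (ψ : G₂ →* H)
    (T₁ : (H → B) → (G₁ → A₁)) (T₂ : (H → B) → (G₂ → A₂))
    (h₁ : IsPhiCellularAutomaton φ T₁) (h₂ : IsPhiCellularAutomaton ψ T₂)
    -- the projections γ₁ = (ι₁)*_{A₁} ∘ π_{A₁} and γ₂ = (ι₂)*_{A₂} ∘ π_{A₂}
    (γ₁ : (Monoid.Coprod G₁ G₂ → A₁ × A₂) → (G₁ → A₁))
    (γ₂ : (Monoid.Coprod G₁ G₂ → A₁ × A₂) → (G₂ → A₂))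
    (hγ₁ : γ₁ = (fun (y : Monoid.Coprod G₁ G₂ → A₁) => y ∘ Monoid.Coprod.inl) ∘
      (fun x => Prod.fst ∘ x))
    (hγ₂ : γ₂ = (fun (y : Monoid.Coprod G₁ G₂ → A₂) => y ∘ Monoid.Coprod.inr) ∘
      (fun x => Prod.snd ∘ x)) :
    ∃ (χ : Monoid.Coprod G₁ G₂ →* H)
      (T : (H → B) → (Monoid.Coprod G₁ G₂ → A₁ × A₂)),
      IsPhiCellularAutomaton χ T ∧ γ₁ ∘ T = T₁ ∧ γ₂ ∘ T = T₂ := by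
  classical
  obtain ⟨S₁, μ₁, hT₁⟩ := h₁
  obtain ⟨S₂, μ₂, hT₂⟩ := h₂
  refine ⟨Monoid.Coprod.lift φ ψ,
    fun x g => (μ₁ (fun s => x (s.1 * Monoid.Coprod.lift φ ψ g)),
                μ₂ (fun s => x (s.1 * Monoid.Coprod.lift φ ψ g))), ?_, ?_, ?_⟩
  · exact ⟨S₁ ∪ S₂, fun f => (μ₁ (fun s => f ⟨s.1, Finset.mem_union_left _ s.2⟩),
      μ₂ (fun s => f ⟨s.1, Finset.mem_union_right _ s.2⟩)), fun x h => rfl⟩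
  · subst hγ₁; funext x g
    simp [Function.comp, hT₁, Monoid.Coprod.lift_apply_inl]
  · subst hγ₂; funext x g
    simp [Function.comp, hT₂, Monoid.Coprod.lift_apply_inr]
end

section
/- Let G₁, G₂, H₁, H₂ be groups, A₁, A₂, B₁, B₂ sets, and φ : H₁ → G₁, ψ : H₂ → G₂ group homomorphisms. Let φ ∗ ψ : H₁ ∗ H₂ → G₁ ∗ G₂ be the unique group homomorphism with (φ ∗ ψ) ∘ ι₁ = ι₁ ∘ φ and (φ ∗ ψ) ∘ ι₂ = ι₂ ∘ ψ. If T : A₁^{G₁} → B₁^{H₁} is a φ-cellular automaton and S : A₂^{G₂} → B₂^{H₂} is a ψ-cellular automaton, then there exists a (φ ∗ ψ)-cellular automaton T × S : (A₁ × A₂)^{G₁ ∗ G₂} → (B₁ × B₂)^{H₁ ∗ H₂} such that (ι₁)*_{B₁} ∘ π_{B₁}^{H₁ ∗ H₂} ∘ (T × S) = T ∘ (ι₁)*_{A₁} ∘ π_{A₁}^{G₁ ∗ G₂} and (ι₂)*_{B₂} ∘ π_{B₂}^{H₁ ∗ H₂} ∘ (T × S) = S ∘ (ι₂)*_{A₂}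 ∘ π_{A₂}^{G₁ ∗ G₂}. -/
theorem stmt_15 {G₁ G₂ H₁ H₂ A₁ A₂ B₁ B₂ : Type*}
    [Group G₁] [Group G₂] [Group H₁] [Group H₂]
    (φ : H₁ →* G₁) (ψ : H₂ →* G₂)
    (Φ : Monoid.Coprod H₁ H₂ →* Monoid.Coprod G₁ G₂)
    -- `Φ = φ ∗ ψ` is the unique homomorphism with `Φ ∘ ι₁ = ι₁ ∘ φ` and `Φ ∘ ι₂ = ι₂ ∘ ψ`
    (hΦ : ∀ Φ' : Monoid.Coprod H₁ H₂ →* Monoid.Coprod G₁ G₂,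
      (Φ'.comp Monoid.Coprod.inl = Monoid.Coprod.inl.comp φ ∧
        Φ'.comp Monoid.Coprod.inr = Monoid.Coprod.inr.comp ψ) ↔ Φ' = Φ)
    (T : (G₁ → A₁) → (H₁ → B₁)) (S : (G₂ → A₂) → (H₂ → B₂))
    (hT : IsPhiCellularAutomaton φ T) (hS : IsPhiCellularAutomaton ψ S) :
    ∃ P : (Monoid.Coprod G₁ G₂ → A₁ × A₂) → (Monoid.Coprod H₁ H₂ → B₁ × B₂),
      IsPhiCellularAutomaton Φ P ∧
      (((fun (y : Monoid.Coprod H₁ H₂ → B₁) => y ∘ Monoid.Coprod.inl) ∘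
          (fun z => Prod.fst ∘ z) ∘ P) =
        (T ∘ (fun (y : Monoid.Coprod G₁ G₂ → A₁) => y ∘ Monoid.Coprod.inl) ∘
          (fun z => Prod.fst ∘ z))) ∧
      (((fun (y : Monoid.Coprod H₁ H₂ → B₂) => y ∘ Monoid.Coprod.inr) ∘
          (fun z => Prod.snd ∘ z) ∘ P) =
        (S ∘ (fun (y : Monoid.Coprod G₁ G₂ → A₂) => y ∘ Monoid.Coprod.inr) ∘
          (fun z => Prod.snd ∘ z))) := by
  classical
  obtain ⟨S₁, μ₁, h₁⟩ := hT
  obtain ⟨S₂, μ₂, h₂⟩ := hS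
  have hc := (hΦ Φ).mpr rfl
  have hc1 : ∀ h : H₁, Φ (Monoid.Coprod.inl h) = Monoid.Coprod.inl (φ h) := fun h =>
    DFunLike.congr_fun hc.1 h
  have hc2 : ∀ h : H₂, Φ (Monoid.Coprod.inr h) = Monoid.Coprod.inr (ψ h) := fun h =>
    DFunLike.congr_fun hc.2 h
  set Sc : Finset (Monoid.Coprod G₁ G₂) :=
    S₁.image Monoid.Coprod.inl ∪ S₂.image Monoid.Coprod.inr with hSc
  have mem1 : ∀ s : G₁, s ∈ S₁ → (Monoid.Coprod.inl s : Monoid.Coprod G₁ G₂) ∈ Sc := by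
    intro s hs; simp [hSc]; exact Or.inl ⟨s, hs, rfl⟩
  have mem2 : ∀ s : G₂, s ∈ S₂ → (Monoid.Coprod.inr s : Monoid.Coprod G₁ G₂) ∈ Sc := by
    intro s hs; simp [hSc]; exact Or.inr ⟨s, hs, rfl⟩
  set μ : ({ s : Monoid.Coprod G₁ G₂ // s ∈ Sc } → A₁ × A₂) → B₁ × B₂ := fun y =>
    (μ₁ (fun s => (y ⟨Monoid.Coprod.inl s.1, mem1 s.1 s.2⟩).1),
     μ₂ (fun s => (y ⟨Monoid.Coprod.inr s.1, mem2 s.1 s.2⟩).2)) with hμ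
  refine ⟨fun x w => μ (fun s => x (s.1 * Φ w)), ⟨Sc, μ, fun x h => rfl⟩, ?_, ?_⟩
  · funext x h
    simp only [Function.comp_apply, hμ]
    rw [h₁]
    congr 1
    funext s
    rw [hc1, ← map_mul]
    rfl
  · funext x h
    simp only [Function.comp_apply, hμ]
    rw [h₂]
    congr 1
    funext s
    rw [hc2, ← map_mul]
    rfl
end
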